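/- The infinite sum of 1/((2i+1) * binom(2i, i)) for i from 1 to infinity equals 2π/(3√3) − 1. -/

import Mathlib

/-!
Since `1 / ((2n+1) * C(2n, n)) = n! n! / (2n+1)! = B(n+1, n+1) = ∫₀¹ (x(1-x))ⁿ dx`,
summing the geometric series under the integral (dominated by `(1/4)ⁿ`) gives
`∫₀¹ dx / (1 - x + x²)`, which the substitution `u = (2x-1)/√3` turns into
`(2/√3)(arctan(1/√3) + arctan(1/√3)) = 2π/(3√3)`.
The term `n = 0` equals `1`.
-/

open Real MeasureTheory
open scoped Nat

theorem integral_pow_mul_one_sub_pow (m n : ℕ) :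
    ∫ x in (0:ℝ)..1, x ^ m * (1 - x) ^ n = (m ! * n ! / (m + n + 1)! : ℝ) := by
  have hbeta := Complex.betaIntegral_eq_Gamma_mul_div (m + 1) (n + 1)
    (by simp only [Complex.add_re, Complex.natCast_re, Complex.one_re]; positivity)
    (by simp only [Complex.add_re, Complex.natCast_re, Complex.one_re]; positivity)
  rw [show (m + 1 : ℂ) + (n + 1) = (m + n + 1 : ℕ) + 1 by push_cast; ring,
    Complex.Gamma_nat_eq_factorial, Complex.Gamma_nat_eq_factorial,
    Complex.Gamma_nat_eq_factorial, Complex.betaIntegral] at hbeta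
  simp only [add_sub_cancel_right, Complex.cpow_natCast] at hbeta
  norm_cast at hbeta
  rw [intervalIntegral.integral_ofReal] at hbeta
  exact Complex.ofReal_injective (by rw [hbeta]; push_cast; rfl)

theorem integral_mul_one_sub_pow (n : ℕ) :
    ∫ x in (0:ℝ)..1, (x * (1 - x)) ^ n = 1 / ((2 * n + 1) * (2 * n).choose n) := by
  simp_rw [mul_pow, integral_pow_mul_one_sub_pow,
    Nat.cast_choose ℝ (Nat.le_mul_of_pos_left n two_pos), show 2 * n - n = n by omega,
    show n + n + 1 = 2 * n + 1 by omega, Nat.factorial_succ]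
  push_cast
  field_simp

theorem integral_inv_one_sub_mul_one_sub :
    ∫ x in (0:ℝ)..1, (1 - x * (1 - x))⁻¹ = 2 * π / (3 * √3) := by
  have h3 : √3 ≠ 0 := by positivity
  have hsq : √3 ^ 2 = 3 := Real.sq_sqrt (by norm_num)
  have hcomplete_square : ∀ x : ℝ, (1 - x * (1 - x))⁻¹ = 4 / 3 * (1 + (2 / √3 * x - 1 / √3) ^ 2)⁻¹ := by
    intro x
    have : 0 < 1 - x * (1 - x) := by nlinarith [sq_nonneg (x - 1 / 2)]
    field_simp
    rw [hsq]
    ring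
  simp_rw [hcomplete_square, intervalIntegral.integral_const_mul,
    intervalIntegral.integral_comp_mul_sub (fun x => (1 + x ^ 2)⁻¹) (div_ne_zero two_ne_zero h3),
    integral_inv_one_add_sq]
  norm_num
  rw [show 2 / √3 - (√3)⁻¹ = (√3)⁻¹ by ring, arctan_inv_sqrt_three]
  field_simp
  rw [hsq]
  ring

theorem hasSum_one_div_two_mul_add_one_mul_choose :
    HasSum (fun n : ℕ => 1 / ((2 * n + 1) * (2 * n).choose n : ℝ)) (2 * π / (3 * √3)) := by
  simp_rw [← integral_mul_one_sub_pow, ← integral_inv_one_sub_mul_one_sub]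
  have hbound : ∀ x ∈ Set.uIoc (0:ℝ) 1, 0 ≤ x * (1 - x) ∧ x * (1 - x) ≤ 1 / 4 := by
    intro x hx
    rw [Set.uIoc_of_le zero_le_one] at hx
    exact ⟨mul_nonneg hx.1.le (by linarith [hx.2]), by nlinarith [sq_nonneg (x - 1 / 2)]⟩
  refine intervalIntegral.hasSum_integral_of_dominated_convergence (fun n _ => (1 / 4 : ℝ) ^ n)
    (fun n => (by fun_prop : Continuous fun x : ℝ => (x * (1 - x)) ^ n).aestronglyMeasurable)
    (fun n => ae_of_all _ fun x hx => ?_)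
    (ae_of_all _ fun _ _ => summable_geometric_of_lt_one (by norm_num) (by norm_num))
    intervalIntegrable_const
    (ae_of_all _ fun x hx => ?_)
  · obtain ⟨h0, h1⟩ := hbound x hx
    rw [norm_pow, Real.norm_of_nonneg h0]
    exact pow_le_pow_left₀ h0 h1 n
  · obtain ⟨h0, h1⟩ := hbound x hx
    exact hasSum_geometric_of_lt_one h0 (h1.trans_lt (by norm_num))

theorem stmt_3 : (∑' i : ℕ, (1:ℝ) / ((2*((i:ℝ)+1)+1) * ((Nat.choose (2*(i+1)) (i+1)) : ℝ))) = 2 * Real.pi / (3 * Real.sqrt 3) - 1 := by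
  have h := (hasSum_nat_add_iff' 1).mpr hasSum_one_div_two_mul_add_one_mul_choose
  simpa using h.tsum_eq
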